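/- arXiv:1706.05628 — 2 statements merged into one kernel-verified Lean document; each statement's English description precedes it below -/
import Mathlib

section
/- Let G be a connected graph, u, v ∈ V(G), and let H be the graph obtained from G by attaching a path P_1 of length k+1 from u to a new vertex u' and a path P_2 of length k+1 from v to a new vertex v', where the internal vertices of P_1 and P_2 are new and disjoint. Then G can be contracted to a path with witness structure in which u and v lie in the two endpoint witness sets using at most k contractions, if and only if H is k-contractible to a path. -/
open SimpleGraph

/-- Contraction of the edge `uv` in `G`: remove `v`, attaching its former
neighbours to `u`. -/
def SimpleGraph.contractEdge {V : Type} (G : SimpleGraph V) (u v : V) :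
    SimpleGraph {x : V // x ≠ v} :=
  SimpleGraph.fromRel (fun a b =>
    G.Adj a.1 b.1 ∨ (a.1 = u ∧ G.Adj v b.1) ∨ (b.1 = u ∧ G.Adj v a.1))

/-- `ContractsIn G H n` : `H` is obtained from `G` by exactly `n` edge contractions. -/
inductive ContractsIn : {V : Type} → SimpleGraph V → {W : Type} → SimpleGraph W → ℕ → Prop
  | iso {V : Type} {G : SimpleGraph V} {W : Type} {H : SimpleGraph W} :
      Nonempty (G ≃g H) → ContractsIn G H 0
  | step {V : Type} {G : SimpleGraph V} (u v : V) (huv : G.Adj u v)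
      {W : Type} {H : SimpleGraph W} {n : ℕ} :
      ContractsIn (G.contractEdge u v) H n → ContractsIn G H (n + 1)

/-- `G` is contractible to `H`. -/
def ContractibleTo {V W : Type} (G : SimpleGraph V) (H : SimpleGraph W) : Prop :=
  ∃ n, ContractsIn G H n

/-- `G` is `k`-contractible to `H` : `H` arises from `G` by at most `k` edge contractions. -/
def KContractible {V W : Type} (G : SimpleGraph V) (H : SimpleGraph W) (k : ℕ) : Prop :=
  ∃ n ≤ k, ContractsIn G H n

/-- An `H`-witness structure of `G`. -/
structure IsWitnessStructure {V W : Type} (G : SimpleGraph V) (H : SimpleGraph W)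
    (Wit : W → Set V) : Prop where
  connected : ∀ h, (G.induce (Wit h)).Connected
  adj : ∀ h₁ h₂ : W, h₁ ≠ h₂ →
    (H.Adj h₁ h₂ ↔ ∃ a ∈ Wit h₁, ∃ b ∈ Wit h₂, G.Adj a b)
  cover : ∀ v : V, ∃ h, v ∈ Wit h
  disjoint : ∀ h₁ h₂ : W, h₁ ≠ h₂ → Disjoint (Wit h₁) (Wit h₂)

/-- `P` is a path graph. -/
def IsPathGraph {W : Type} (P : SimpleGraph W) : Prop :=
  ∃ n, Nonempty (P ≃g SimpleGraph.pathGraph n)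

/-- `C` is a cycle graph (on at least 3 vertices). -/
def IsCycleGraph {W : Type} (C : SimpleGraph W) : Prop :=
  ∃ n, 3 ≤ n ∧ Nonempty (C ≃g SimpleGraph.cycleGraph n)

/-- `G` is 2-edge-connected. -/
def TwoEdgeConnected {V : Type} (G : SimpleGraph V) : Prop :=
  G.Connected ∧ ∀ e ∈ G.edgeSet, (G.deleteEdges {e}).Connected

/-- `G` is 2-connected. -/
def TwoConnected {V : Type} (G : SimpleGraph V) : Prop :=
  G.Connected ∧ 3 ≤ Nat.card V ∧ ∀ v : V, (G.induce {u | u ≠ v}).Connected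

/-- `C₁` and `C₂` are (exactly the) two connected components of `G - {x, y}`. -/
def TwoComponents {V : Type} (G : SimpleGraph V) (x y : V) (C₁ C₂ : Set V) : Prop :=
  Disjoint C₁ C₂ ∧ C₁ ∪ C₂ = {v | v ≠ x ∧ v ≠ y} ∧
  C₁.Nonempty ∧ C₂.Nonempty ∧
  (G.induce C₁).Connected ∧ (G.induce C₂).Connected ∧
  ∀ a ∈ C₁, ∀ b ∈ C₂, ¬ G.Adj a b

/-- `C` is an optimal (longest) cycle to which `G` can be contracted. -/
def OptimalCycle {V W : Type} (G : SimpleGraph V) (C : SimpleGraph W) : Prop :=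
  IsCycleGraph C ∧ ContractibleTo G C ∧
  ∀ (W' : Type) (C' : SimpleGraph W'), IsCycleGraph C' → ContractibleTo G C' →
    Nat.card W' ≤ Nat.card W

/-- `G` can be contracted to a path, with `a` in one endpoint witness set and `b` in
the other, using at most `k` edge contractions. -/
def PathContractFixed {V : Type} (G : SimpleGraph V) (a b : V) (k : ℕ) : Prop :=
  ∃ (n : ℕ) (Wit : Fin (n + 1) → Set V),
    IsWitnessStructure G (SimpleGraph.pathGraph (n + 1)) Wit ∧
    Nat.card V ≤ (n + 1) + k ∧
    ((a ∈ Wit 0 ∧ b ∈ Wit (Fin.last n)) ∨ (a ∈ Wit (Fin.last n) ∧ b ∈ Wit 0))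

/-- The graph `H` obtained from `G` by attaching a pendant path of length `k + 1` at
`u` (ending at the new vertex `Sum.inr (Sum.inl (Fin.last k))`) and a pendant path of
length `k + 1` at `v` (ending at `Sum.inr (Sum.inr (Fin.last k))`). -/
def attachPaths {V : Type} (G : SimpleGraph V) (u v : V) (k : ℕ) :
    SimpleGraph (V ⊕ (Fin (k + 1) ⊕ Fin (k + 1))) :=
  SimpleGraph.fromRel (fun a b =>
    (∃ x y, a = Sum.inl x ∧ b = Sum.inl y ∧ G.Adj x y) ∨
    (a = Sum.inl u ∧ b = Sum.inr (Sum.inl 0)) ∨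
    (a = Sum.inl v ∧ b = Sum.inr (Sum.inr 0)) ∨
    (∃ i j : Fin (k + 1), a = Sum.inr (Sum.inl i) ∧ b = Sum.inr (Sum.inl j) ∧
      (i : ℕ) + 1 = (j : ℕ)) ∨
    (∃ i j : Fin (k + 1), a = Sum.inr (Sum.inr i) ∧ b = Sum.inr (Sum.inr j) ∧
      (i : ℕ) + 1 = (j : ℕ)))

/-!
Contractions to `H` correspond to `H`-witness structures, which we describe by the map `f`
sending a vertex to the index of its witness set; the number of contractions is `|V| - |H|`.

Forward: a witness map of `G` onto a path with `u` and `v` at the two ends extends to `H` by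
laying the two pendant paths out vertex by vertex beyond the two ends, at no extra cost.

Backward: with at most `k` contractions no witness set has more than `k + 1` vertices, so the
pendant path at `u` leaves the witness set of `u`, and the first witness set it enters consists of
pendant vertices only. As `G` is connected, the indices of the witness sets meeting `V` form an
interval `[g₁, g₂]`, and a witness set in that interval which contains a pendant vertex also
contains its root. Hence `u` lies at an end of the interval, and so does `v`; they lie at different
ends unless `g₁ = g₂`, for otherwise both pendant paths would enter the same witness set. The
witness sets with index in `[g₁, g₂]`, restricted to `V`, form the required witness structure of
`G`, and each of the remaining witness sets contains a pendant vertex, which bounds the number of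
contractions.
-/

namespace SimpleGraph

variable {α β : Type*} {X : SimpleGraph α} {Y : SimpleGraph β}

theorem Reachable.map_of_forall_adj {φ : α → β}
    (hφ : ∀ a b, X.Adj a b → Y.Reachable (φ a) (φ b)) {a b : α} (h : X.Reachable a b) :
    Y.Reachable (φ a) (φ b) := by
  simp only [reachable_iff_reflTransGen] at h hφ ⊢
  exact Relation.ReflTransGen.lift' φ hφ _ _ h

theorem Preconnected.of_forall_adj {φ : α → β} (hX : X.Preconnected)
    (hφ : ∀ a b, X.Adj a b → Y.Reachable (φ a) (φ b)) (hcover : ∀ b, ∃ a, Y.Reachable b (φ a)) :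
    Y.Preconnected := fun b b' => by
  obtain ⟨a, ha⟩ := hcover b
  obtain ⟨a', ha'⟩ := hcover b'
  exact ha.trans ((hX a a').map_of_forall_adj hφ |>.trans ha'.symm)

theorem mem_of_induce_preconnected_of_boundary {S C : Set α} {w : α}
    (hS : (X.induce S).Preconnected) (hC : ∀ a b, X.Adj a b → a ∈ C → b ∉ C → b = w)
    {c d : α} (hcS : c ∈ S) (hcC : c ∈ C) (hdS : d ∈ S) (hdC : d ∉ C) : w ∈ S := by
  obtain ⟨p⟩ := hS ⟨c, hcS⟩ ⟨d, hdS⟩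
  obtain ⟨e, -, he₁, he₂⟩ := p.exists_boundary_dart {z | z.1 ∈ C} hcC hdC
  rw [← hC _ _ e.adj he₁ he₂]
  exact e.snd.2

theorem Walk.exists_mem_support_eq_of_mem_uIcc {f : α → ℕ}
    (hf : ∀ a b, X.Adj a b → f a ≤ f b + 1) {a b : α} (p : X.Walk a b) {c : ℕ}
    (hc : c ∈ Set.uIcc (f a) (f b)) : ∃ x ∈ p.support, f x = c := by
  induction p with
  | nil =>
    simp only [Set.uIcc_self, Set.mem_singleton_iff] at hc
    exact ⟨_, Walk.start_mem_support _, hc.symm⟩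
  | @cons a a' b hadj q ih =>
    by_cases hc' : c ∈ Set.uIcc (f a') (f b)
    · obtain ⟨x, hx, rfl⟩ := ih hc'
      exact ⟨x, by simp [hx], rfl⟩
    · refine ⟨a, Walk.start_mem_support _, ?_⟩
      have := hf _ _ hadj
      have := hf _ _ hadj.symm
      simp only [Set.mem_uIcc] at hc hc'
      omega

end SimpleGraph

theorem Fin.exists_castSucc_and_not_succ {n : ℕ} {p : Fin (n + 1) → Prop} (h₀ : p 0)
    (h : ∃ j, ¬ p j) : ∃ i : Fin n, p i.castSucc ∧ ¬ p i.succ := by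
  by_contra! hp
  obtain ⟨j, hj⟩ := h
  exact hj (Fin.induction h₀ hp j)

theorem Nat.card_subtype_ne_add_one {α : Type*} [Finite α] (a : α) :
    Nat.card {x // x ≠ a} + 1 = Nat.card α := by
  classical
  rw [← Nat.card_congr (Equiv.sumCompl (· = a)), Nat.card_sum]
  simp [add_comm]

abbrev IsWitnessMap {V W : Type} (G : SimpleGraph V) (H : SimpleGraph W) (f : V → W) : Prop :=
  IsWitnessStructure G H (fun h => f ⁻¹' {h})

section WitnessMap

variable {V W : Type} {G : SimpleGraph V} {H : SimpleGraph W} {f : V → W}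

theorem isWitnessMap_iff : IsWitnessMap G H f ↔ (∀ h, (G.induce (f ⁻¹' {h})).Connected) ∧
    ∀ h₁ h₂, h₁ ≠ h₂ → (H.Adj h₁ h₂ ↔ ∃ a b, f a = h₁ ∧ f b = h₂ ∧ G.Adj a b) := by
  refine ⟨fun hf => ⟨hf.connected, fun h₁ h₂ hne => by simpa using hf.adj h₁ h₂ hne⟩,
    fun ⟨hconn, hadj⟩ => ⟨hconn, fun h₁ h₂ hne => by simpa using hadj h₁ h₂ hne,
      fun x => ⟨f x, rfl⟩, fun h₁ h₂ hne => ?_⟩⟩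
  exact Set.disjoint_left.2 fun x hx₁ hx₂ => hne (hx₁.symm.trans hx₂)

namespace IsWitnessMap

theorem surjective (hf : IsWitnessMap G H f) : Function.Surjective f := fun h =>
  let ⟨⟨x, hx⟩⟩ := (hf.connected h).nonempty
  ⟨x, hx⟩

theorem adj_of_adj (hf : IsWitnessMap G H f) {a b : V} (hab : G.Adj a b) (hne : f a ≠ f b) :
    H.Adj (f a) (f b) :=
  (hf.adj _ _ hne).2 ⟨a, rfl, b, rfl, hab⟩

theorem exists_adj_of_adj (hf : IsWitnessMap G H f) {h₁ h₂ : W} (h : H.Adj h₁ h₂) :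
    ∃ a b, f a = h₁ ∧ f b = h₂ ∧ G.Adj a b := by
  simpa using (hf.adj _ _ h.ne).1 h

theorem comp_iso (hf : IsWitnessMap G H f) {W' : Type} {H' : SimpleGraph W'} (e : H ≃g H') :
    IsWitnessMap G H' (e ∘ f) := by
  refine isWitnessMap_iff.2 ⟨fun h => ?_, fun h₁ h₂ hne => ?_⟩
  · have : (e ∘ f) ⁻¹' {h} = f ⁻¹' {e.symm h} := by ext; simp [e.eq_symm_apply]
    exact this ▸ hf.connected (e.symm h)
  · rw [← e.symm.map_adj_iff, (isWitnessMap_iff.1 hf).2 _ _ (e.symm.injective.ne hne)]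
    simp [e.eq_symm_apply]

theorem card_add_card_le [Finite V] (hf : IsWitnessMap G H f) (h₀ : W) :
    Nat.card (f ⁻¹' {h₀}) + Nat.card W ≤ Nat.card V + 1 := by
  have : Finite W := Finite.of_surjective f hf.surjective
  obtain ⟨s, hs⟩ := hf.surjective.hasRightInverse
  have hinj : Function.Injective (Sum.elim Subtype.val (s ∘ Subtype.val) :
      f ⁻¹' {h₀} ⊕ {h // h ≠ h₀} → V) := by
    rintro (⟨x, hx⟩ | ⟨h, hh⟩) (⟨y, hy⟩ | ⟨h', hh'⟩) hxy <;>
      simp only [Sum.elim_inl, Sum.elim_inr, Function.comp_apply] at hxy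
    · exact congrArg _ (Subtype.ext hxy)
    · exact absurd (by rw [← hs h', ← hxy]; exact hx) hh'
    · exact absurd (by rw [← hs h, hxy]; exact hy) hh
    · exact congrArg _ (Subtype.ext (hs.injective hxy))
  have := Nat.card_le_card_of_injective _ hinj
  rw [Nat.card_sum] at this
  have := Nat.card_subtype_ne_add_one h₀
  omega

end IsWitnessMap

theorem IsWitnessStructure.isWitnessMap {Wit : W → Set V} (hW : IsWitnessStructure G H Wit) :
    ∃ f, IsWitnessMap G H f ∧ ∀ x h, f x = h ↔ x ∈ Wit h := by
  choose f hf using hW.cover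
  have hmem : ∀ x h, f x = h ↔ x ∈ Wit h := fun x h =>
    ⟨(· ▸ hf x), fun hx => by_contra fun hne => (hW.disjoint _ _ hne).ne_of_mem (hf x) hx rfl⟩
  have hWit : (fun h => f ⁻¹' {h}) = Wit := by ext h x; exact hmem x h
  exact ⟨f, show IsWitnessStructure G H _ by rwa [hWit], hmem⟩

end WitnessMap

namespace SimpleGraph.Adj

variable {V : Type} {G : SimpleGraph V} {u v : V} (huv : G.Adj u v)

open Classical in
noncomputable def contractMap (x : V) : {x : V // x ≠ v} :=
  if hx : x = v then ⟨u, huv.ne⟩ else ⟨x, hx⟩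

@[simp] theorem contractMap_self : huv.contractMap v = ⟨u, huv.ne⟩ := dif_pos rfl

@[simp] theorem contractMap_val (p : {x : V // x ≠ v}) : huv.contractMap p.1 = p :=
  dif_neg p.2

theorem val_contractMap_eq_or (x : V) :
    (huv.contractMap x).1 = x ∨ x = v ∧ (huv.contractMap x).1 = u := by
  by_cases hx : x = v
  · subst hx; simp
  · simp [contractMap, hx]

theorem contractEdge_adj_contractMap {a b : V} (hab : G.Adj a b)
    (hne : huv.contractMap a ≠ huv.contractMap b) :
    (G.contractEdge u v).Adj (huv.contractMap a) (huv.contractMap b) := by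
  refine (fromRel_adj _ _ _).2 ⟨hne, Or.inl ?_⟩
  by_cases ha : a = v <;> by_cases hb : b = v
  · exact absurd (ha ▸ hb ▸ hab) (G.irrefl)
  · subst ha; simp [contractMap, hb, hab]
  · subst hb; simp [contractMap, ha, hab.symm]
  · simp [contractMap, ha, hb, hab]

theorem exists_adj_of_contractEdge_adj {p q : {x : V // x ≠ v}}
    (h : (G.contractEdge u v).Adj p q) :
    ∃ a b, huv.contractMap a = p ∧ huv.contractMap b = q ∧ G.Adj a b := by
  obtain ⟨-, h | h⟩ := (fromRel_adj _ _ _).1 h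
  · rcases h with h | ⟨hp, h⟩ | ⟨hq, h⟩
    · exact ⟨p, q, by simp, by simp, h⟩
    · exact ⟨v, q, by simp [← hp], by simp, h⟩
    · exact ⟨p, v, by simp, by simp [← hq], h.symm⟩
  · rcases h with h | ⟨hq, h⟩ | ⟨hp, h⟩
    · exact ⟨p, q, by simp, by simp, h.symm⟩
    · exact ⟨p, v, by simp, by simp [← hq], h.symm⟩
    · exact ⟨v, q, by simp [← hp], by simp, h⟩

theorem reachable_induce_contractMap {T : Set {x : V // x ≠ v}} {x : V}
    (hx : huv.contractMap x ∈ T) :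
    (G.induce (huv.contractMap ⁻¹' T)).Reachable ⟨x, hx⟩
      ⟨(huv.contractMap x).1, by simpa using hx⟩ := by
  rcases huv.val_contractMap_eq_or x with h | ⟨rfl, h⟩
  · simp only [h]; rfl
  · exact Adj.reachable (by simpa [h] using huv.symm)

theorem induce_preimage_contractMap_connected_iff {T : Set {x // x ≠ v}} :
    (G.induce (huv.contractMap ⁻¹' T)).Connected ↔ ((G.contractEdge u v).induce T).Connected := by
  simp only [connected_iff]
  constructor
  · rintro ⟨hc, ⟨x⟩⟩
    refine ⟨hc.of_forall_adj (φ := fun x => ⟨huv.contractMap x.1, x.2⟩) (fun a b hab => ?_)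
      (fun p => ⟨⟨p.1, by simp⟩, by simp⟩), ⟨_, x.2⟩⟩
    by_cases he : huv.contractMap a.1 = huv.contractMap b.1
    · simp only [he]; rfl
    · exact Adj.reachable (huv.contractEdge_adj_contractMap hab he)
  · rintro ⟨hc, ⟨p⟩⟩
    refine ⟨hc.of_forall_adj (φ := fun p => ⟨p.1.1, by simp⟩) (fun p q hpq => ?_)
      (fun x => ⟨⟨_, x.2⟩, huv.reachable_induce_contractMap (T := T) (x := x.1) x.2⟩),
      ⟨_, (by simp : p.1.1 ∈ huv.contractMap ⁻¹' T)⟩⟩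
    obtain ⟨a, b, ha, hb, hab⟩ := huv.exists_adj_of_contractEdge_adj hpq
    have hpa : huv.contractMap a ∈ T := ha ▸ p.2
    have hqb : huv.contractMap b ∈ T := hb ▸ q.2
    have := (huv.reachable_induce_contractMap hpa).symm.trans
      ((Adj.reachable (G := G.induce _) (u := ⟨a, hpa⟩) (v := ⟨b, hqb⟩) hab).trans
        (huv.reachable_induce_contractMap hqb))
    simpa [ha, hb] using this

end SimpleGraph.Adj

section Contraction

variable {V W : Type} {G : SimpleGraph V} {H : SimpleGraph W} {f : V → W}

theorem isWitnessMap_comp_contractMap_iff {u v : V} (huv : G.Adj u v) {g : {x // x ≠ v} → W} :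
    IsWitnessMap G H (g ∘ huv.contractMap) ↔ IsWitnessMap (G.contractEdge u v) H g := by
  simp only [isWitnessMap_iff, Set.preimage_comp, huv.induce_preimage_contractMap_connected_iff]
  refine and_congr_right fun _ => forall₂_congr fun h₁ h₂ => imp_congr_right
    fun hne => iff_congr Iff.rfl ⟨?_, ?_⟩
  · rintro ⟨a, b, rfl, rfl, hab⟩
    exact ⟨_, _, rfl, rfl, huv.contractEdge_adj_contractMap hab (ne_of_apply_ne g hne)⟩
  · rintro ⟨p, q, rfl, rfl, hpq⟩
    obtain ⟨a, b, rfl, rfl, hab⟩ := huv.exists_adj_of_contractEdge_adj hpq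
    exact ⟨a, b, rfl, rfl, hab⟩

theorem ContractsIn.exists_isWitnessMap {n : ℕ} (h : ContractsIn G H n) : ∃ f : V → W, IsWitnessMap G H f := by
  induction h with
  | iso e =>
    obtain ⟨e⟩ := e
    refine ⟨e, isWitnessMap_iff.2 ⟨fun h => ?_, fun h₁ h₂ _ => ?_⟩⟩
    · have : (e : _ → _) ⁻¹' {h} = {e.symm h} := by ext; simp [e.eq_symm_apply]
      rw [this, induce_singleton_eq_top]
      exact connected_top
    · refine ⟨fun hadj => ⟨e.symm h₁, e.symm h₂, by simp, by simp, e.symm.map_adj_iff.2 hadj⟩, ?_⟩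
      rintro ⟨a, b, rfl, rfl, hab⟩
      exact e.map_adj_iff.2 hab
  | step u v huv _ ih =>
    obtain ⟨g, hg⟩ := ih
    exact ⟨_, (isWitnessMap_comp_contractMap_iff huv).2 hg⟩

theorem ContractsIn.card_eq [Finite V] {n : ℕ} (h : ContractsIn G H n) : Nat.card V = Nat.card W + n := by
  revert ‹Finite V›
  induction h with
  | iso e => exact Nat.card_congr (Classical.choice e).toEquiv
  | step u v huv _ ih =>
    intro
    rw [← Nat.card_subtype_ne_add_one v, ih]
    ring

noncomputable def IsWitnessMap.isoOfBijective (hf : IsWitnessMap G H f) (hbij : Function.Bijective f) :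
    G ≃g H where
  toEquiv := Equiv.ofBijective f hbij
  map_rel_iff' {a b} := by
    by_cases hab : a = b
    · simp [hab]
    · simp only [Equiv.ofBijective_apply, (isWitnessMap_iff.1 hf).2 _ _ (hbij.1.ne hab)]
      exact ⟨fun ⟨a', b', ha, hb, h⟩ => hbij.1 ha ▸ hbij.1 hb ▸ h, fun h => ⟨a, b, rfl, rfl, h⟩⟩

theorem IsWitnessMap.exists_adj_of_not_injective (hf : IsWitnessMap G H f) (hinj : ¬ Function.Injective f) :
    ∃ x y, G.Adj x y ∧ f x = f y := by
  obtain ⟨a, b, hfab, hab⟩ : ∃ a b, f a = f b ∧ a ≠ b := by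
    simpa [Function.Injective] using hinj
  obtain ⟨p⟩ := (hf.connected (f a)).preconnected ⟨a, rfl⟩ ⟨b, hfab.symm⟩
  have hp : ¬ p.Nil := Walk.not_nil_of_ne fun h => hab (congrArg Subtype.val h)
  exact ⟨a, p.snd, p.adj_snd hp, p.snd.2.symm⟩

theorem IsWitnessMap.contractEdge (hf : IsWitnessMap G H f) {x y : V} (hxy : G.Adj x y) (hfxy : f x = f y) :
    IsWitnessMap (G.contractEdge x y) H (f ∘ Subtype.val) := by
  refine (isWitnessMap_comp_contractMap_iff hxy).1 ?_
  convert hf using 2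
  ext z
  rcases hxy.val_contractMap_eq_or z with h | ⟨rfl, h⟩ <;> simp [h, hfxy]

theorem IsWitnessMap.contractsIn [Finite V] {n : ℕ} (hf : IsWitnessMap G H f)
    (hcard : Nat.card V = Nat.card W + n) : ContractsIn G H n := by
  induction n generalizing V with
  | zero => exact .iso ⟨hf.isoOfBijective (hf.surjective.bijective_of_nat_card_le hcard.le)⟩
  | succ n ih =>
    have : Finite W := Finite.of_surjective f hf.surjective
    obtain ⟨x, y, hxy, hfxy⟩ := hf.exists_adj_of_not_injective fun hinj => by
      have := Nat.card_le_card_of_injective f hinj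
      omega
    refine .step x y hxy (ih (hf.contractEdge hxy hfxy) ?_)
    have := Nat.card_subtype_ne_add_one y
    omega

end Contraction

section PathWitness

variable {V : Type} {G : SimpleGraph V} {m : ℕ} {f : V → Fin m}

theorem IsWitnessMap.val_le_val_add_one (hf : IsWitnessMap G (pathGraph m) f) {a b : V}
    (hab : G.Adj a b) : (f a : ℕ) ≤ f b + 1 := by
  by_cases h : f a = f b
  · simp [h]
  · have := hf.adj_of_adj hab h
    rw [pathGraph_adj] at this
    omega

theorem IsWitnessMap.exists_adj_of_val_add_one_eq (hf : IsWitnessMap G (pathGraph m) f)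
    {i j : Fin m} (h : (i : ℕ) + 1 = j) : ∃ a b, f a = i ∧ f b = j ∧ G.Adj a b :=
  hf.exists_adj_of_adj (by rw [pathGraph_adj]; omega)

theorem isWitnessMap_pathGraph (hsurj : Function.Surjective f)
    (hconn : ∀ i, (G.induce (f ⁻¹' {i})).Preconnected)
    (hlip : ∀ a b, G.Adj a b → (f a : ℕ) ≤ f b + 1)
    (hstep : ∀ i j : Fin m, (i : ℕ) + 1 = j → ∃ a b, f a = i ∧ f b = j ∧ G.Adj a b) :
    IsWitnessMap G (pathGraph m) f := by
  refine isWitnessMap_iff.2 ⟨fun i => ?_, fun i j hne => ?_⟩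
  · obtain ⟨x, hx⟩ := hsurj i
    exact (connected_iff _).2 ⟨hconn i, ⟨x, hx⟩⟩
  rw [pathGraph_adj]
  constructor
  · rintro (h | h)
    · exact hstep i j h
    · obtain ⟨a, b, ha, hb, hab⟩ := hstep j i h
      exact ⟨b, a, hb, ha, hab.symm⟩
  · rintro ⟨a, b, rfl, rfl, hab⟩
    have := hlip a b hab
    have := hlip b a hab.symm
    have := Fin.val_ne_of_ne hne
    omega

theorem exists_isWitnessMap_pathGraph_of_nat {g : V → ℕ} {a n : ℕ}
    (hg : ∀ x, a ≤ g x ∧ g x ≤ a + n) (hsurj : ∀ i ≤ n, ∃ x, g x = a + i)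
    (hconn : ∀ i ≤ n, (G.induce (g ⁻¹' {a + i})).Preconnected)
    (hlip : ∀ x y, G.Adj x y → g x ≤ g y + 1)
    (hstep : ∀ i < n, ∃ x y, g x = a + i ∧ g y = a + i + 1 ∧ G.Adj x y) :
    ∃ f : V → Fin (n + 1), IsWitnessMap G (pathGraph (n + 1)) f ∧ ∀ x, a + f x = g x := by
  let f (x : V) : Fin (n + 1) := ⟨g x - a, by have := hg x; omega⟩
  have hf (x) : a + f x = g x := Nat.add_sub_of_le (hg x).1
  refine ⟨f, isWitnessMap_pathGraph (fun i => ?_) (fun i => ?_) (fun x y h => ?_)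
    (fun i j h => ?_), hf⟩
  · obtain ⟨x, hx⟩ := hsurj i (by omega)
    exact ⟨x, Fin.ext (by have := hf x; omega)⟩
  · have : f ⁻¹' {i} = g ⁻¹' {a + i} := by
      ext x
      have := hf x
      simp only [Set.mem_preimage, Set.mem_singleton_iff, Fin.ext_iff]
      omega
    exact this ▸ hconn i (by omega)
  · have := hlip x y h
    have := hf x
    have := hf y
    omega
  · obtain ⟨x, y, hx, hy, hxy⟩ := hstep i (by omega)
    exact ⟨x, y, Fin.ext (by have := hf x; omega), Fin.ext (by have := hf y; omega), hxy⟩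

end PathWitness

def SimpleGraph.pathGraph.revIso (n : ℕ) : pathGraph n ≃g pathGraph n where
  toEquiv := Fin.revPerm
  map_rel_iff' := by
    intro a b
    simp only [Fin.revPerm_apply, pathGraph_adj, Fin.val_rev]
    omega

section Chain

variable {V W : Type} {G : SimpleGraph V} {H : SimpleGraph W} {f : V → W}

theorem IsWitnessMap.exists_adj_of_chain [Finite V] (hf : IsWitnessMap G H f) {n : ℕ}
    {c : Fin (n + 1) → V} (hc : Function.Injective c)
    (hadj : ∀ i : Fin n, G.Adj (c i.castSucc) (c i.succ))
    (hsize : Nat.card (f ⁻¹' {f (c 0)}) ≤ n) : ∃ i : Fin n, H.Adj (f (c 0)) (f (c i.succ)) := by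
  obtain ⟨i, hi, hi'⟩ := Fin.exists_castSucc_and_not_succ (p := fun j => f (c j) = f (c 0)) rfl
    (by
      by_contra! hall
      have : n + 1 ≤ Nat.card (f ⁻¹' {f (c 0)}) := by
        simpa using Nat.card_le_card_of_injective (β := f ⁻¹' {f (c 0)}) (fun j => ⟨c j, hall j⟩)
          fun j j' h => hc (congrArg Subtype.val h)
      omega)
  exact ⟨i, hi ▸ hf.adj_of_adj (hadj i) (hi.trans_ne (Ne.symm hi'))⟩

theorem IsWitnessMap.exists_adj_forall_mem_of_chain [Finite V] (hf : IsWitnessMap G H f)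
    {C : Set V} {w : V} (hC : ∀ a b, G.Adj a b → a ∈ C → b ∉ C → b = w) {n : ℕ}
    {c : Fin (n + 1) → V} (hc : Function.Injective c)
    (hadj : ∀ i : Fin n, G.Adj (c i.castSucc) (c i.succ)) (hc₀ : c 0 = w)
    (hcC : ∀ i : Fin n, c i.succ ∈ C) (hsize : Nat.card (f ⁻¹' {f w}) ≤ n) :
    ∃ a ∈ C, H.Adj (f w) (f a) ∧ ∀ b, f b = f a → b ∈ C := by
  subst hc₀
  obtain ⟨i, hi⟩ := hf.exists_adj_of_chain hc hadj hsize
  refine ⟨_, hcC i, hi, fun b hb => by_contra fun hbC => hi.ne ?_⟩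
  exact mem_of_induce_preconnected_of_boundary (S := f ⁻¹' {f (c i.succ)})
    (hf.connected _).preconnected hC rfl (hcC i) hb hbC

end Chain

section AttachPaths

variable {V : Type} {G : SimpleGraph V} {u v : V} {k : ℕ}

theorem attachPaths_adj_induction {P : V ⊕ (Fin (k + 1) ⊕ Fin (k + 1)) →
      V ⊕ (Fin (k + 1) ⊕ Fin (k + 1)) → Prop}
    (hsymm : ∀ a b, P a b → P b a) (hG : ∀ x y, G.Adj x y → P (.inl x) (.inl y))
    (hu : P (.inl u) (.inr (.inl 0))) (hv : P (.inl v) (.inr (.inr 0)))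
    (hl : ∀ i j : Fin (k + 1), (i : ℕ) + 1 = j → P (.inr (.inl i)) (.inr (.inl j)))
    (hr : ∀ i j : Fin (k + 1), (i : ℕ) + 1 = j → P (.inr (.inr i)) (.inr (.inr j)))
    {a b : V ⊕ (Fin (k + 1) ⊕ Fin (k + 1))} (h : (attachPaths G u v k).Adj a b) : P a b := by
  have key : ∀ a b, (∃ x y, a = .inl x ∧ b = .inl y ∧ G.Adj x y) ∨
      (a = .inl u ∧ b = .inr (.inl 0)) ∨ (a = .inl v ∧ b = .inr (.inr 0)) ∨
      (∃ i j : Fin (k + 1), a = .inr (.inl i) ∧ b = .inr (.inl j) ∧ (i : ℕ) + 1 = j) ∨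
      (∃ i j : Fin (k + 1), a = .inr (.inr i) ∧ b = .inr (.inr j) ∧ (i : ℕ) + 1 = j) → P a b := by
    rintro a b (⟨x, y, rfl, rfl, h⟩ | ⟨rfl, rfl⟩ | ⟨rfl, rfl⟩ | ⟨i, j, rfl, rfl, h⟩ |
      ⟨i, j, rfl, rfl, h⟩)
    exacts [hG x y h, hu, hv, hl i j h, hr i j h]
  obtain ⟨-, h | h⟩ := (fromRel_adj _ _ _).1 h
  exacts [key a b h, hsymm _ _ (key b a h)]

theorem attachPaths_adj_inl {x y : V} (h : G.Adj x y) :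
    (attachPaths G u v k).Adj (.inl x) (.inl y) :=
  (fromRel_adj _ _ _).2 ⟨by simpa using h.ne, .inl (.inl ⟨x, y, rfl, rfl, h⟩)⟩

theorem attachPaths_adj_inl_left : (attachPaths G u v k).Adj (.inl u) (.inr (.inl 0)) :=
  (fromRel_adj _ _ _).2 ⟨by simp, .inl (.inr (.inl ⟨rfl, rfl⟩))⟩

theorem attachPaths_adj_inl_right : (attachPaths G u v k).Adj (.inl v) (.inr (.inr 0)) :=
  (fromRel_adj _ _ _).2 ⟨by simp, .inl (.inr (.inr (.inl ⟨rfl, rfl⟩)))⟩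

theorem attachPaths_adj_left {i j : Fin (k + 1)} (h : (i : ℕ) + 1 = j) :
    (attachPaths G u v k).Adj (.inr (.inl i)) (.inr (.inl j)) :=
  (fromRel_adj _ _ _).2 ⟨by simp [Fin.ext_iff]; omega,
    .inl (.inr (.inr (.inr (.inl ⟨i, j, rfl, rfl, h⟩))))⟩

theorem attachPaths_adj_right {i j : Fin (k + 1)} (h : (i : ℕ) + 1 = j) :
    (attachPaths G u v k).Adj (.inr (.inr i)) (.inr (.inr j)) :=
  (fromRel_adj _ _ _).2 ⟨by simp [Fin.ext_iff]; omega,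
    .inl (.inr (.inr (.inr (.inr ⟨i, j, rfl, rfl, h⟩))))⟩

def attachPathsRetraction (u v : V) (k : ℕ) : V ⊕ (Fin (k + 1) ⊕ Fin (k + 1)) → V :=
  Sum.elim id (Sum.elim (fun _ => u) fun _ => v)

theorem attachPathsRetraction_eq_or_adj {a b : V ⊕ (Fin (k + 1) ⊕ Fin (k + 1))}
    (h : (attachPaths G u v k).Adj a b) :
    attachPathsRetraction u v k a = attachPathsRetraction u v k b ∨
      G.Adj (attachPathsRetraction u v k a) (attachPathsRetraction u v k b) :=
  attachPaths_adj_induction (P := fun a b => attachPathsRetraction u v k a =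
      attachPathsRetraction u v k b ∨
      G.Adj (attachPathsRetraction u v k a) (attachPathsRetraction u v k b))
    (fun _ _ => Or.imp Eq.symm Adj.symm) (fun _ _ => .inr) (.inl rfl)
    (.inl rfl) (fun _ _ _ => .inl rfl) (fun _ _ _ => .inl rfl) h

theorem attachPaths_eq_inl_of_adj_left {a b : V ⊕ (Fin (k + 1) ⊕ Fin (k + 1))}
    (h : (attachPaths G u v k).Adj a b) (ha : a ∈ Set.range (Sum.inr ∘ Sum.inl))
    (hb : b ∉ Set.range (Sum.inr ∘ Sum.inl)) : b = .inl u := by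
  refine (attachPaths_adj_induction
    (P := fun a b => (a ∈ Set.range (Sum.inr ∘ Sum.inl) → b ∉ Set.range (Sum.inr ∘ Sum.inl) →
      b = .inl u) ∧ (b ∈ Set.range (Sum.inr ∘ Sum.inl) → a ∉ Set.range (Sum.inr ∘ Sum.inl) →
      a = .inl u)) (fun _ _ => And.symm) ?_ ?_ ?_ ?_ ?_ h).1 ha hb <;> simp

theorem attachPaths_eq_inl_of_adj_right {a b : V ⊕ (Fin (k + 1) ⊕ Fin (k + 1))}
    (h : (attachPaths G u v k).Adj a b) (ha : a ∈ Set.range (Sum.inr ∘ Sum.inr))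
    (hb : b ∉ Set.range (Sum.inr ∘ Sum.inr)) : b = .inl v := by
  refine (attachPaths_adj_induction
    (P := fun a b => (a ∈ Set.range (Sum.inr ∘ Sum.inr) → b ∉ Set.range (Sum.inr ∘ Sum.inr) →
      b = .inl v) ∧ (b ∈ Set.range (Sum.inr ∘ Sum.inr) → a ∉ Set.range (Sum.inr ∘ Sum.inr) →
      a = .inl v)) (fun _ _ => And.symm) ?_ ?_ ?_ ?_ ?_ h).1 ha hb <;> simp

def attachPathsLeftLeg (u : V) (k : ℕ) : Fin (k + 2) → V ⊕ (Fin (k + 1) ⊕ Fin (k + 1)) :=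
  Fin.cons (.inl u) (Sum.inr ∘ Sum.inl)

def attachPathsRightLeg (v : V) (k : ℕ) : Fin (k + 2) → V ⊕ (Fin (k + 1) ⊕ Fin (k + 1)) :=
  Fin.cons (.inl v) (Sum.inr ∘ Sum.inr)

theorem attachPathsLeftLeg_injective : Function.Injective (attachPathsLeftLeg u k) :=
  Fin.cons_injective_iff.2 ⟨by simp, Sum.inr_injective.comp Sum.inl_injective⟩

theorem attachPathsRightLeg_injective : Function.Injective (attachPathsRightLeg v k) :=
  Fin.cons_injective_iff.2 ⟨by simp, Sum.inr_injective.comp Sum.inr_injective⟩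

theorem attachPaths_adj_leftLeg (i : Fin (k + 1)) :
    (attachPaths G u v k).Adj (attachPathsLeftLeg u k i.castSucc)
      (attachPathsLeftLeg u k i.succ) := by
  cases i using Fin.cases with
  | zero => exact attachPaths_adj_inl_left
  | succ i => simpa [attachPathsLeftLeg, ← Fin.succ_castSucc] using attachPaths_adj_left (by simp)

theorem attachPaths_adj_rightLeg (i : Fin (k + 1)) :
    (attachPaths G u v k).Adj (attachPathsRightLeg v k i.castSucc)
      (attachPathsRightLeg v k i.succ) := by
  cases i using Fin.cases with
  | zero => exact attachPaths_adj_inl_right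
  | succ i => simpa [attachPathsRightLeg, ← Fin.succ_castSucc] using attachPaths_adj_right (by simp)

end AttachPaths

section Forward

variable {V : Type} {G : SimpleGraph V} {u v : V} {k n : ℕ} {f : V → Fin (n + 1)}

def attachPathsExtend (f : V → Fin (n + 1)) (k : ℕ) :
    V ⊕ (Fin (k + 1) ⊕ Fin (k + 1)) → Fin (n + 2 * k + 3) :=
  Sum.elim (fun x => ⟨k + 1 + f x, by omega⟩)
    (Sum.elim (fun j => ⟨k - j, by omega⟩) fun j => ⟨k + n + 2 + j, by omega⟩)

@[simp] theorem val_attachPathsExtend_inl (x : V) :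
    (attachPathsExtend f k (.inl x) : ℕ) = k + 1 + f x := rfl

@[simp] theorem val_attachPathsExtend_left (j : Fin (k + 1)) :
    (attachPathsExtend f k (.inr (.inl j)) : ℕ) = k - j := rfl

@[simp] theorem val_attachPathsExtend_right (j : Fin (k + 1)) :
    (attachPathsExtend f k (.inr (.inr j)) : ℕ) = k + n + 2 + j := rfl

theorem attachPathsExtend_surjective (hf : Function.Surjective f) :
    Function.Surjective (attachPathsExtend f k) := fun i => by
  by_cases h₁ : (i : ℕ) ≤ k
  · exact ⟨.inr (.inl ⟨k - i, by omega⟩), Fin.ext (by simp; omega)⟩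
  by_cases h₂ : (i : ℕ) ≤ k + n + 1
  · obtain ⟨x, hx⟩ := hf ⟨i - (k + 1), by omega⟩
    exact ⟨.inl x, Fin.ext (by simp [hx]; omega)⟩
  · exact ⟨.inr (.inr ⟨i - (k + n + 2), by omega⟩), Fin.ext (by simp; omega)⟩

theorem IsWitnessMap.preconnected_induce_preimage_attachPathsExtend
    (hf : IsWitnessMap G (pathGraph (n + 1)) f) (i : Fin (n + 2 * k + 3)) :
    ((attachPaths G u v k).induce (attachPathsExtend f k ⁻¹' {i})).Preconnected := by
  rintro ⟨z, rfl⟩ ⟨z', hz'⟩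
  simp only [Set.mem_preimage, Set.mem_singleton_iff, Fin.ext_iff] at hz'
  rcases z with x | j | j <;> rcases z' with x' | j' | j' <;>
    simp only [val_attachPathsExtend_inl, val_attachPathsExtend_left,
      val_attachPathsExtend_right] at hz' <;>
    try (exfalso; omega)
  · have hfx : f x' = f x := Fin.ext (by omega)
    refine ((hf.connected (f x)).preconnected ⟨x, rfl⟩ ⟨x', hfx⟩).map_of_forall_adj
      (X := G.induce (f ⁻¹' {f x}))
      (φ := fun y => (⟨.inl y.1, by simp [Fin.ext_iff, show f y.1 = f x from y.2]⟩ :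
        attachPathsExtend f k ⁻¹' {attachPathsExtend f k (.inl x)}))
      fun a b hab => Adj.reachable (attachPaths_adj_inl (G := G) hab)
  · obtain rfl : j' = j := Fin.ext (by omega)
    rfl
  · obtain rfl : j' = j := Fin.ext (by omega)
    rfl

theorem IsWitnessMap.val_attachPathsExtend_le_add_one (hf : IsWitnessMap G (pathGraph (n + 1)) f)
    (hu : f u = 0) (hv : f v = Fin.last n) {a b : V ⊕ (Fin (k + 1) ⊕ Fin (k + 1))}
    (hab : (attachPaths G u v k).Adj a b) :
    (attachPathsExtend f k a : ℕ) ≤ attachPathsExtend f k b + 1 := by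
  refine (attachPaths_adj_induction
    (P := fun a b => (attachPathsExtend f k a : ℕ) ≤ attachPathsExtend f k b + 1 ∧
      (attachPathsExtend f k b : ℕ) ≤ attachPathsExtend f k a + 1)
    (fun _ _ => And.symm) (fun x y hxy => ?_) ?_ ?_ (fun i j hij => ?_) (fun i j hij => ?_)
    hab).1
  · have := hf.val_le_val_add_one hxy
    have := hf.val_le_val_add_one hxy.symm
    simp only [val_attachPathsExtend_inl]
    omega
  all_goals simp only [val_attachPathsExtend_inl, val_attachPathsExtend_left,
    val_attachPathsExtend_right, hu, hv, Fin.val_zero, Fin.val_last]; omega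

theorem IsWitnessMap.exists_adj_attachPathsExtend (hf : IsWitnessMap G (pathGraph (n + 1)) f)
    (hu : f u = 0) (hv : f v = Fin.last n) {i j : Fin (n + 2 * k + 3)} (hij : (i : ℕ) + 1 = j) :
    ∃ a b, attachPathsExtend f k a = i ∧ attachPathsExtend f k b = j ∧
      (attachPaths G u v k).Adj a b := by
  have hu' : (f u : ℕ) = 0 := by simp [hu]
  have hv' : (f v : ℕ) = n := by simp [hv]
  by_cases h₁ : (i : ℕ) < k
  · exact ⟨.inr (.inl ⟨k - i, by omega⟩), .inr (.inl ⟨k - j, by omega⟩),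
      Fin.ext (by simp; omega), Fin.ext (by simp; omega),
      (attachPaths_adj_left (by simp; omega)).symm⟩
  by_cases h₂ : (i : ℕ) = k
  · exact ⟨.inr (.inl 0), .inl u, Fin.ext (by simp; omega), Fin.ext (by simp; omega),
      attachPaths_adj_inl_left.symm⟩
  by_cases h₃ : (i : ℕ) < k + n + 1
  · obtain ⟨x, y, hx, hy, hxy⟩ := hf.exists_adj_of_val_add_one_eq
      (i := ⟨i - (k + 1), by omega⟩) (j := ⟨j - (k + 1), by omega⟩) (by simp; omega)
    exact ⟨.inl x, .inl y, Fin.ext (by simp [hx]; omega), Fin.ext (by simp [hy]; omega),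
      attachPaths_adj_inl hxy⟩
  by_cases h₄ : (i : ℕ) = k + n + 1
  · exact ⟨.inl v, .inr (.inr 0), Fin.ext (by simp; omega), Fin.ext (by simp; omega),
      attachPaths_adj_inl_right⟩
  · exact ⟨.inr (.inr ⟨i - (k + n + 2), by omega⟩), .inr (.inr ⟨j - (k + n + 2), by omega⟩),
      Fin.ext (by simp; omega), Fin.ext (by simp; omega), attachPaths_adj_right (by simp; omega)⟩

theorem isWitnessMap_attachPathsExtend (hf : IsWitnessMap G (pathGraph (n + 1)) f)
    (hu : f u = 0) (hv : f v = Fin.last n) :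
    IsWitnessMap (attachPaths G u v k) (pathGraph (n + 2 * k + 3)) (attachPathsExtend f k) :=
  isWitnessMap_pathGraph (attachPathsExtend_surjective hf.surjective)
    hf.preconnected_induce_preimage_attachPathsExtend
    (fun _ _ => hf.val_attachPathsExtend_le_add_one hu hv)
    (fun _ _ => hf.exists_adj_attachPathsExtend hu hv)

end Forward

section Backward

variable {V W : Type} {G : SimpleGraph V} {H : SimpleGraph W} {u v : V} {k : ℕ}
  {F : V ⊕ (Fin (k + 1) ⊕ Fin (k + 1)) → W}

theorem IsWitnessMap.exists_adj_attachPaths_left [Finite V]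
    (hF : IsWitnessMap (attachPaths G u v k) H F)
    (hsize : Nat.card (F ⁻¹' {F (.inl u)}) ≤ k + 1) :
    ∃ a ∈ Set.range (Sum.inr ∘ Sum.inl), H.Adj (F (.inl u)) (F a) ∧
      ∀ b, F b = F a → b ∈ Set.range (Sum.inr ∘ Sum.inl) :=
  hF.exists_adj_forall_mem_of_chain (fun _ _ => attachPaths_eq_inl_of_adj_left)
    attachPathsLeftLeg_injective attachPaths_adj_leftLeg rfl (fun i => ⟨i, rfl⟩) hsize

theorem IsWitnessMap.exists_adj_attachPaths_right [Finite V]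
    (hF : IsWitnessMap (attachPaths G u v k) H F)
    (hsize : Nat.card (F ⁻¹' {F (.inl v)}) ≤ k + 1) :
    ∃ a ∈ Set.range (Sum.inr ∘ Sum.inr), H.Adj (F (.inl v)) (F a) ∧
      ∀ b, F b = F a → b ∈ Set.range (Sum.inr ∘ Sum.inr) :=
  hF.exists_adj_forall_mem_of_chain (fun _ _ => attachPaths_eq_inl_of_adj_right)
    attachPathsRightLeg_injective attachPaths_adj_rightLeg rfl (fun i => ⟨i, rfl⟩) hsize

theorem IsWitnessMap.apply_inl_attachPathsRetraction (hF : IsWitnessMap (attachPaths G u v k) H F)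
    {x : V} {z : V ⊕ (Fin (k + 1) ⊕ Fin (k + 1))} (h : F (.inl x) = F z) :
    F (.inl (attachPathsRetraction u v k z)) = F z := by
  rcases z with y | j | j
  · rfl
  · exact mem_of_induce_preconnected_of_boundary (S := F ⁻¹' {F (.inr (.inl j))})
      (hF.connected _).preconnected (fun _ _ => attachPaths_eq_inl_of_adj_left) rfl ⟨j, rfl⟩ h
      (by simp)
  · exact mem_of_induce_preconnected_of_boundary (S := F ⁻¹' {F (.inr (.inr j))})
      (hF.connected _).preconnected (fun _ _ => attachPaths_eq_inl_of_adj_right) rfl ⟨j, rfl⟩ h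
      (by simp)

theorem IsWitnessMap.preconnected_induce_preimage_inl
    (hF : IsWitnessMap (attachPaths G u v k) H F) {h : W} (hh : ∃ x, F (.inl x) = h) :
    (G.induce ((F ∘ Sum.inl) ⁻¹' {h})).Preconnected := by
  obtain ⟨x, rfl⟩ := hh
  refine (hF.connected _).preconnected.of_forall_adj
    (φ := fun z => ⟨attachPathsRetraction u v k z.1,
      (hF.apply_inl_attachPathsRetraction z.2.symm).trans z.2⟩)
    (fun a b hab => ?_) (fun y => ⟨⟨.inl y.1, y.2⟩, .rfl⟩)
  rcases attachPathsRetraction_eq_or_adj hab with h | h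
  · convert Reachable.rfl using 2
    exact Subtype.ext h.symm
  · exact Adj.reachable h

theorem IsWitnessMap.exists_adj_inl (hF : IsWitnessMap (attachPaths G u v k) H F) {h₁ h₂ : W}
    (h : H.Adj h₁ h₂) (hh₁ : ∃ x, F (.inl x) = h₁) (hh₂ : ∃ x, F (.inl x) = h₂) :
    ∃ x y, F (.inl x) = h₁ ∧ F (.inl y) = h₂ ∧ G.Adj x y := by
  obtain ⟨a, b, rfl, rfl, hab⟩ := hF.exists_adj_of_adj h
  obtain ⟨x, hx⟩ := hh₁
  obtain ⟨y, hy⟩ := hh₂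
  refine ⟨_, _, hF.apply_inl_attachPathsRetraction hx, hF.apply_inl_attachPathsRetraction hy,
    (attachPathsRetraction_eq_or_adj hab).resolve_left fun he => h.ne ?_⟩
  rw [← hF.apply_inl_attachPathsRetraction hx, ← hF.apply_inl_attachPathsRetraction hy, he]

end Backward

section BackwardPath

variable {V : Type} {G : SimpleGraph V} {u v : V} {k m : ℕ}
  {F : V ⊕ (Fin (k + 1) ⊕ Fin (k + 1)) → Fin m}

theorem IsWitnessMap.exists_apply_inl_eq (hF : IsWitnessMap (attachPaths G u v k) (pathGraph m) F)
    (hconn : G.Connected) (x₁ x₂ : V) {i : Fin m}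
    (hi : (i : ℕ) ∈ Set.uIcc (F (.inl x₁) : ℕ) (F (.inl x₂))) : ∃ x, F (.inl x) = i := by
  obtain ⟨p⟩ := hconn.preconnected x₁ x₂
  obtain ⟨x, -, hx⟩ := p.exists_mem_support_eq_of_mem_uIcc (f := fun x => (F (.inl x) : ℕ))
    (fun _ _ h => hF.val_le_val_add_one (attachPaths_adj_inl h)) hi
  exact ⟨x, Fin.ext hx⟩

theorem IsWitnessMap.exists_isWitnessMap_of_attachPaths
    (hF : IsWitnessMap (attachPaths G u v k) (pathGraph m) F) (hconn : G.Connected) {x₁ x₂ : V}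
    (h₁ : ∀ x, F (.inl x₁) ≤ F (.inl x)) (h₂ : ∀ x, F (.inl x) ≤ F (.inl x₂)) :
    ∃ f : V → Fin ((F (.inl x₂) : ℕ) - F (.inl x₁) + 1), IsWitnessMap G (pathGraph _) f ∧
      ∀ x, (F (.inl x₁) : ℕ) + f x = F (.inl x) := by
  have hg (x) : (F (.inl x₁) : ℕ) ≤ F (.inl x) ∧ (F (.inl x) : ℕ) ≤ F (.inl x₂) := ⟨h₁ x, h₂ x⟩
  have hlt : (F (.inl x₂) : ℕ) < m := (F _).2
  have h₁₂ := hg x₂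
  have hmid (i : ℕ) (hi : i ≤ (F (.inl x₂) : ℕ) - F (.inl x₁)) :
      ∃ x, F (.inl x) = ⟨F (.inl x₁) + i, by omega⟩ :=
    hF.exists_apply_inl_eq hconn x₁ x₂ (Set.mem_uIcc.2 (.inl ⟨by simp, by simp; omega⟩))
  refine exists_isWitnessMap_pathGraph_of_nat (fun x => ⟨(hg x).1, by have := hg x; omega⟩)
    (fun i hi => ?_) (fun i hi => ?_)
    (fun x y h => hF.val_le_val_add_one (attachPaths_adj_inl h)) (fun i hi => ?_)
  · obtain ⟨x, hx⟩ := hmid i hi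
    exact ⟨x, congrArg Fin.val hx⟩
  · have : (fun x => (F (.inl x) : ℕ)) ⁻¹' {F (.inl x₁) + i} =
        (F ∘ Sum.inl) ⁻¹' {⟨F (.inl x₁) + i, by omega⟩} := by
      ext; simp [Fin.ext_iff]
    exact this ▸ hF.preconnected_induce_preimage_inl (hmid i hi)
  · obtain ⟨x, y, hx, hy, hxy⟩ := hF.exists_adj_inl (by simp only [pathGraph_adj]; omega)
      (hmid i hi.le) (hmid (i + 1) hi)
    exact ⟨x, y, congrArg Fin.val hx, congrArg Fin.val hy, hxy⟩

theorem IsWitnessMap.attachPaths_ends [Finite V]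
    (hF : IsWitnessMap (attachPaths G u v k) (pathGraph m) F)
    (hconn : G.Connected) (hcard : Nat.card (V ⊕ (Fin (k + 1) ⊕ Fin (k + 1))) ≤ m + k)
    {x₁ x₂ : V} (h₁ : ∀ x, F (.inl x₁) ≤ F (.inl x)) (h₂ : ∀ x, F (.inl x) ≤ F (.inl x₂)) :
    ((F (.inl u) : ℕ) = F (.inl x₁) ∧ (F (.inl v) : ℕ) = F (.inl x₂)) ∨
      ((F (.inl u) : ℕ) = F (.inl x₂) ∧ (F (.inl v) : ℕ) = F (.inl x₁)) := by
  have hsize (i : Fin m) : Nat.card (F ⁻¹' {i}) ≤ k + 1 := by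
    have := hF.card_add_card_le i
    rw [Nat.card_fin] at this
    omega
  obtain ⟨_, ⟨ja, rfl⟩, hua, hA⟩ := hF.exists_adj_attachPaths_left (hsize _)
  obtain ⟨_, ⟨jb, rfl⟩, hvb, hB⟩ := hF.exists_adj_attachPaths_right (hsize _)
  have hout (z) (hz : ∀ b, F b = F z → b ∉ Set.range Sum.inl) :
      (F z : ℕ) < F (.inl x₁) ∨ (F (.inl x₂) : ℕ) < F z := by
    by_contra! h
    obtain ⟨x, hx⟩ := hF.exists_apply_inl_eq hconn x₁ x₂ (Set.mem_uIcc.2 (.inl h))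
    exact hz _ hx ⟨x, rfl⟩
  have ha := hout (.inr (.inl ja)) fun b hb => by obtain ⟨j, rfl⟩ := hA b hb; simp
  have hb := hout (.inr (.inr jb)) fun b hb => by obtain ⟨j, rfl⟩ := hB b hb; simp
  have hab : (F (.inr (.inl ja)) : ℕ) ≠ F (.inr (.inr jb)) := fun h => by
    obtain ⟨j, hj⟩ := hA _ (Fin.ext h).symm
    simp at hj
  simp only [Function.comp_apply, pathGraph_adj] at hua hvb
  have := Fin.le_def.1 (h₁ u)
  have := Fin.le_def.1 (h₂ u)
  have := Fin.le_def.1 (h₁ v)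
  have := Fin.le_def.1 (h₂ v)
  -- The pendant vertices found above lie in distinct witness sets outside `[F x₁, F x₂]`,
  -- next to those of `u` and `v`.
  omega

theorem IsWitnessMap.le_of_attachPaths (hF : IsWitnessMap (attachPaths G u v k) (pathGraph m) F)
    {x₁ x₂ : V} (h₁ : ∀ x, F (.inl x₁) ≤ F (.inl x)) (h₂ : ∀ x, F (.inl x) ≤ F (.inl x₂)) :
    m ≤ (F (.inl x₂) : ℕ) - F (.inl x₁) + 1 + 2 * (k + 1) := by
  let ψ : Fin ((F (.inl x₂) : ℕ) - F (.inl x₁) + 1) ⊕ (Fin (k + 1) ⊕ Fin (k + 1)) → Fin m :=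
    Sum.elim (fun i => ⟨F (.inl x₁) + i, by have := (F (.inl x₂)).2; omega⟩) (F ∘ Sum.inr)
  have hψ : Function.Surjective ψ := fun i => by
    obtain ⟨x | p, rfl⟩ := hF.surjective i
    · have := Fin.le_def.1 (h₁ x)
      have := Fin.le_def.1 (h₂ x)
      exact ⟨.inl ⟨F (.inl x) - F (.inl x₁), by omega⟩, Fin.ext (by simp [ψ]; omega)⟩
    · exact ⟨.inr p, rfl⟩
  simpa [two_mul, add_assoc] using Nat.card_le_card_of_surjective ψ hψ

theorem IsWitnessMap.pathContractFixed_of_attachPaths [Finite V]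
    (hF : IsWitnessMap (attachPaths G u v k) (pathGraph m) F) (hconn : G.Connected)
    (hcard : Nat.card (V ⊕ (Fin (k + 1) ⊕ Fin (k + 1))) ≤ m + k) :
    PathContractFixed G u v k := by
  have : Nonempty V := hconn.nonempty
  obtain ⟨x₁, h₁⟩ := Finite.exists_min fun x => F (.inl x)
  obtain ⟨x₂, h₂⟩ := Finite.exists_max fun x => F (.inl x)
  obtain ⟨f, hf, hfF⟩ := hF.exists_isWitnessMap_of_attachPaths hconn h₁ h₂
  have hends := hF.attachPaths_ends hconn hcard h₁ h₂
  have hm := hF.le_of_attachPaths h₁ h₂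
  have := hfF u
  have := hfF v
  refine ⟨_, fun i => f ⁻¹' {i}, hf, ?_, ?_⟩
  · simp only [Nat.card_sum, Nat.card_fin] at hcard
    omega
  · simp only [Set.mem_preimage, Set.mem_singleton_iff, Fin.ext_iff, Fin.val_zero, Fin.val_last]
    omega

end BackwardPath

theorem PathContractFixed.exists_isWitnessMap {V : Type} {G : SimpleGraph V} {u v : V} {k : ℕ}
    (h : PathContractFixed G u v k) : ∃ (n : ℕ) (f : V → Fin (n + 1)),
      IsWitnessMap G (pathGraph (n + 1)) f ∧ Nat.card V ≤ n + 1 + k ∧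
        f u = 0 ∧ f v = Fin.last n := by
  obtain ⟨n, Wit, hW, hcard, hends⟩ := h
  obtain ⟨f, hf, hmem⟩ := hW.isWitnessMap
  rcases hends with ⟨hu, hv⟩ | ⟨hu, hv⟩
  · exact ⟨n, f, hf, hcard, (hmem u 0).2 hu, (hmem v _).2 hv⟩
  · refine ⟨n, _, hf.comp_iso (pathGraph.revIso _), hcard, ?_, ?_⟩ <;>
      simp [pathGraph.revIso, (hmem u _).2 hu, (hmem v _).2 hv]

theorem PathContractFixed.exists_kContractible_attachPaths {V : Type} [Finite V]
    {G : SimpleGraph V} {u v : V} {k : ℕ} (h : PathContractFixed G u v k) :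
    ∃ m, KContractible (attachPaths G u v k) (pathGraph m) k := by
  obtain ⟨n, f, hf, hcard, hu, hv⟩ := h.exists_isWitnessMap
  have hn : n + 1 ≤ Nat.card V := by simpa using Nat.card_le_card_of_surjective f hf.surjective
  refine ⟨n + 2 * k + 3, Nat.card V - (n + 1), by omega,
    (isWitnessMap_attachPathsExtend hf hu hv).contractsIn ?_⟩
  simp only [Nat.card_sum, Nat.card_fin]
  omega

/-- `G` can be contracted to a path with `u` and `v` in the two endpoint
witness sets using at most `k` contractions, iff the graph `H` obtained by attaching
pendant paths of length `k + 1` at `u` and at `v` is `k`-contractible to a path. -/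
theorem stmt15 {V : Type} [Finite V] (G : SimpleGraph V) (hconn : G.Connected)
    (u v : V) (k : ℕ) :
    PathContractFixed G u v k ↔
      ∃ (W : Type) (P : SimpleGraph W), IsPathGraph P ∧
        KContractible (attachPaths G u v k) P k := by
  refine ⟨fun h => ?_, fun ⟨W, P, ⟨m, ⟨e⟩⟩, n, hn, hP⟩ => ?_⟩
  · obtain ⟨m, hm⟩ := h.exists_kContractible_attachPaths
    exact ⟨_, _, ⟨m, ⟨.refl⟩⟩, hm⟩
  · obtain ⟨F, hF⟩ := hP.exists_isWitnessMap
    refine (hF.comp_iso e).pathContractFixed_of_attachPaths hconn ?_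
    rw [hP.card_eq, Nat.card_congr e.toEquiv, Nat.card_fin]
    omega
end

section
/- If a connected graph G has a block B (maximal 2-connected subgraph) with |V(B)| ≥ k + 2 and |V(G) \ V(B)| ≥ k + 1, then G is not k-contractible to a cycle. -/
open SimpleGraph

/-- A block of `G`: a maximal 2-connected (induced) subgraph, given by its vertex set. -/
def IsBlock {V : Type} (G : SimpleGraph V) (B : Set V) : Prop :=
  TwoConnected (G.induce B) ∧
  ∀ B' : Set V, B ⊆ B' → TwoConnected (G.induce B') → B' = B


/-!
Contracting an edge `uv` cannot destroy 2-connected vertex sets: a 2-connected set `D` of `G/uv`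
lifts to a 2-connected set of `G` with at least as many vertices (add `v` next to the merged
vertex, or read the merged vertex as `u` or as `v` when only one of them has neighbours in `D`).
A cycle is 2-connected, so if `k` contractions turn `G` into a cycle, `G` has a 2-connected set `E`
missing at most `k` vertices. If `E` meets the block `B` in two vertices, `E ∪ B` is 2-connected,
so `E ⊆ B` by maximality and `E` misses all of `V \ B`; otherwise `E` misses all but at most one
vertex of `B`. Either way `E` misses at least `k + 1` vertices.
-/

open Set

namespace SimpleGraph

variable {V W : Type} {G : SimpleGraph V} {H : SimpleGraph W}

noncomputable def induceDeleteIso (G : SimpleGraph V) (s : Set V) (c : s) :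
    (G.induce s).induce {x | x ≠ c} ≃g G.induce (s \ {c.1}) where
  toEquiv := (Equiv.Set.image _ _ Subtype.val_injective).trans
    (Equiv.setCongr (by ext; simp [Subtype.ext_iff, and_comm]))
  map_rel_iff' := Iff.rfl

lemma Connected.induce_image {f : V → W} {s : Set V}
    (hf : ∀ a ∈ s, ∀ b ∈ s, G.Adj a b → H.Adj (f a) (f b)) (hs : (G.induce s).Connected) :
    (H.induce (f '' s)).Connected :=
  let φ : G.induce s →g H.induce (f '' s) :=
    ⟨fun a => ⟨f a, mem_image_of_mem f a.2⟩, fun {a b} h => hf a.1 a.2 b.1 b.2 h⟩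
  hs.map φ (by rintro ⟨_, a, ha, rfl⟩; exact ⟨⟨a, ha⟩, rfl⟩)

lemma Connected.induce_insert {s : Set V} {a b : V} (hs : (G.induce s).Connected) (hb : b ∈ s)
    (hab : G.Adj a b) : (G.induce (insert a s)).Connected := by
  rw [insert_eq]
  exact connected_induce_union (by simp) hs.preconnected rfl hb hab

lemma Reachable.map_of_forall_adj_s18 {f : V → W}
    (hf : ∀ a b, G.Adj a b → H.Reachable (f a) (f b)) {a b : V} (h : G.Reachable a b) :
    H.Reachable (f a) (f b) := by
  rw [reachable_iff_reflTransGen] at h ⊢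
  exact Relation.ReflTransGen.lift' f (fun a b hab => (reachable_iff_reflTransGen _ _).1
    (hf a b hab)) _ _ h

-- Deleting a vertex outside `T` deletes nothing, so this includes connectivity of `G[T]`.
def TwoConnectedOn (G : SimpleGraph V) (T : Set V) : Prop :=
  3 ≤ T.ncard ∧ ∀ c, (G.induce (T \ {c})).Connected

variable {T : Set V}

lemma TwoConnectedOn.connected_induce (h : TwoConnectedOn G T) : (G.induce T).Connected := by
  obtain ⟨a, b, c, -, -, hc, hab, hac, hbc⟩ :=
    (two_lt_ncard_iff (finite_of_ncard_pos (by linarith [h.1]))).1 h.1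
  have hT : T = (T \ {a}) ∪ (T \ {b}) := by
    rw [← sdiff_inter, singleton_inter_eq_empty.2 (show a ∉ ({b} : Set V) from hab),
      sdiff_empty]
  rw [hT]
  exact induce_union_connected (h.2 a).preconnected (h.2 b).preconnected
    ⟨c, ⟨hc, hac.symm⟩, ⟨hc, hbc.symm⟩⟩

lemma twoConnected_induce_iff : TwoConnected (G.induce T) ↔ TwoConnectedOn G T := by
  rw [TwoConnected, Nat.card_coe_set_eq, TwoConnectedOn]
  constructor
  · rintro ⟨hT, hcard, hdel⟩
    refine ⟨hcard, fun c => ?_⟩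
    by_cases hc : c ∈ T
    · exact (induceDeleteIso G T ⟨c, hc⟩).connected_iff.1 (hdel ⟨c, hc⟩)
    · rwa [sdiff_singleton_eq_self hc]
  · intro h
    exact ⟨TwoConnectedOn.connected_induce h, h.1,
      fun c => (induceDeleteIso G T c).connected_iff.2 (h.2 c)⟩

lemma TwoConnectedOn.image {f : V → W} (hinj : InjOn f T)
    (hf : ∀ a ∈ T, ∀ b ∈ T, G.Adj a b → H.Adj (f a) (f b)) (h : TwoConnectedOn G T) :
    TwoConnectedOn H (f '' T) := by
  refine ⟨hinj.ncard_image.symm ▸ h.1, fun c => ?_⟩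
  by_cases hc : c ∈ f '' T
  · obtain ⟨a, ha, rfl⟩ := hc
    rw [← image_singleton, ← hinj.image_sdiff_subset (singleton_subset_iff.2 ha)]
    exact (h.2 a).induce_image fun x hx y hy => hf x hx.1 y hy.1
  · rw [sdiff_singleton_eq_self hc]
    exact h.connected_induce.induce_image hf

lemma TwoConnectedOn.image_iso (φ : G ≃g H) (h : TwoConnectedOn G T) :
    TwoConnectedOn H (φ '' T) :=
  h.image φ.injective.injOn fun _ _ _ _ hab => φ.map_adj_iff.2 hab

lemma TwoConnectedOn.union [Finite V] {S : Set V} (hS : TwoConnectedOn G S)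
    (hT : TwoConnectedOn G T) (hST : 2 ≤ (S ∩ T).ncard) : TwoConnectedOn G (S ∪ T) := by
  refine ⟨hS.1.trans (ncard_le_ncard subset_union_left), fun c => ?_⟩
  obtain ⟨a, ⟨haS, haT⟩, hac⟩ := exists_ne_of_one_lt_ncard hST c
  rw [union_sdiff_distrib]
  exact induce_union_connected (hS.2 c).preconnected (hT.2 c).preconnected
    ⟨a, ⟨haS, hac⟩, ⟨haT, hac⟩⟩

lemma twoConnectedOn_univ_cycleGraph {n : ℕ} (hn : 3 ≤ n) :
    TwoConnectedOn (cycleGraph n) univ := by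
  obtain ⟨n, rfl⟩ : ∃ m, n = m + 2 := ⟨n - 2, by omega⟩
  refine ⟨by simpa using hn, fun c => ?_⟩
  let φ : pathGraph (n + 1) →g (cycleGraph (n + 2)).induce (univ \ {c}) :=
    ⟨fun i => ⟨c + i.succ, by simp⟩, fun {i j} h => by
      have : (pathGraph (n + 2)).Adj i.succ j.succ := by simpa [pathGraph_adj] using h
      simpa [cycleGraph_adj] using pathGraph_le_cycleGraph this⟩
  refine (pathGraph_connected n).map φ ?_
  rintro ⟨x, hx⟩
  obtain ⟨i, hi⟩ := Fin.exists_succ_eq.2 (sub_ne_zero.2 (by simpa using hx) : x - c ≠ 0)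
  exact ⟨i, Subtype.ext (by simp [φ, hi])⟩

section contractEdge

variable {v : V} {u : {x // x ≠ v}}

lemma contractEdge_adj {a b : {x // x ≠ v}} :
    (G.contractEdge u v).Adj a b ↔
      a ≠ b ∧ (G.Adj a b ∨ (a = u ∧ G.Adj v b) ∨ (b = u ∧ G.Adj v a)) := by
  simp only [contractEdge, fromRel_adj, ← Subtype.ext_iff, G.adj_comm b.1 a.1]
  tauto

lemma contractEdge_adj_of_ne {a b : {x // x ≠ v}} (ha : a ≠ u) (hb : b ≠ u) :
    (G.contractEdge u v).Adj a b ↔ G.Adj a b := by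
  rw [contractEdge_adj]
  exact ⟨fun h => by tauto, fun h => ⟨fun hab => h.ne (congrArg Subtype.val hab), .inl h⟩⟩

lemma Connected.induce_insert_image_val_of_contractEdge (huv : G.Adj u v)
    {S : Set {x // x ≠ v}} (hu : u ∈ S) (hS : ((G.contractEdge u v).induce S).Connected) :
    (G.induce (insert v (Subtype.val '' S))).Connected := by
  set T := insert v (Subtype.val '' S)
  let ι : S → T := fun a => ⟨a.1.1, Or.inr (mem_image_of_mem _ a.2)⟩
  have hv : (G.induce T).Adj ⟨v, mem_insert _ _⟩ (ι ⟨u, hu⟩) := huv.symm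
  have hvia (a b : S) (ha : a.1 = u) (hb : G.Adj v b.1) : (G.induce T).Reachable (ι a) (ι b) := by
    obtain rfl : a = ⟨u, hu⟩ := Subtype.ext ha
    exact hv.symm.reachable.trans (Adj.reachable (G := G.induce T) hb)
  have hlift (a b : S) (hab : ((G.contractEdge u v).induce S).Adj a b) :
      (G.induce T).Reachable (ι a) (ι b) := by
    obtain ⟨-, hab | ⟨ha, hb⟩ | ⟨hb, ha⟩⟩ := contractEdge_adj.1 hab
    · exact Adj.reachable (G := G.induce T) hab
    · exact hvia a b ha hb
    · exact (hvia b a hb ha).symm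
  rw [connected_iff_exists_forall_reachable]
  refine ⟨⟨v, mem_insert _ _⟩, ?_⟩
  rintro ⟨x, rfl | ⟨a, ha, rfl⟩⟩
  · rfl
  · exact hv.reachable.trans ((hS.preconnected ⟨u, hu⟩ ⟨a, ha⟩).map_of_forall_adj_s18 hlift)

lemma TwoConnectedOn.exists_relabel_of_contractEdge {D : Set {x // x ≠ v}} {w : V}
    (hw : w = u ∨ w = v)
    (hadj : u ∈ D → ∀ b ∈ D, b ≠ u → G.Adj u b ∨ G.Adj v b → G.Adj w b)
    (hD : TwoConnectedOn (G.contractEdge u v) D) :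
    ∃ E, TwoConnectedOn G E ∧ D.ncard ≤ E.ncard := by
  classical
  let f : {x // x ≠ v} → V := fun a => if a = u then w else a
  have hinj : f.Injective := by
    intro a b hab
    by_cases ha : a = u <;> by_cases hb : b = u <;> simp only [f, ha, hb, if_true, if_false] at hab
    · exact ha.trans hb.symm
    · rcases hw with rfl | rfl
      exacts [absurd (Subtype.ext hab.symm) hb, absurd hab.symm b.2]
    · rcases hw with rfl | rfl
      exacts [absurd (Subtype.ext hab) ha, absurd hab a.2]
    · exact Subtype.ext hab
  have hhom : ∀ a ∈ D, ∀ b ∈ D, (G.contractEdge u v).Adj a b → G.Adj (f a) (f b) := by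
    intro a ha b hb h
    obtain ⟨hne, hab⟩ := contractEdge_adj.1 h
    by_cases hau : a = u <;> by_cases hbu : b = u
    · exact absurd (hau.trans hbu.symm) hne
    · subst hau
      simpa [f, hbu] using hadj ha b hb hbu (by tauto)
    · subst hbu
      simpa [f, hau] using (hadj hb a ha hau (by rw [G.adj_comm]; tauto)).symm
    · simpa [f, hau, hbu] using hab
  exact ⟨f '' D, hD.image hinj.injOn hhom, (hinj.injOn.ncard_image).ge⟩

lemma TwoConnectedOn.insert_image_val_of_contractEdge (huv : G.Adj u v)
    {D : Set {x // x ≠ v}} (hu : u ∈ D) (hnu : ∃ b ∈ D, b ≠ u ∧ G.Adj u b)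
    (hnv : ∃ b ∈ D, b ≠ u ∧ G.Adj v b)
    (hD : TwoConnectedOn (G.contractEdge u v) D) :
    TwoConnectedOn G (insert v (Subtype.val '' D)) := by
  have hins (w : V) (hw : ∃ b ∈ D, b ≠ u ∧ G.Adj w b) :
      (G.induce (insert w (Subtype.val '' (D \ {u})))).Connected := by
    obtain ⟨b, hb, hbu, hwb⟩ := hw
    refine Connected.induce_insert ?_ (mem_image_of_mem _ ⟨hb, hbu⟩) hwb
    exact (hD.2 u).induce_image fun a ha b hb h => (contractEdge_adj_of_ne ha.2 hb.2).1 h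
  refine ⟨?_, fun c => ?_⟩
  · have hfin : D.Finite := finite_of_ncard_pos (by linarith [hD.1])
    rw [ncard_insert_of_notMem (by simp) (hfin.image _), Subtype.val_injective.injOn.ncard_image]
    linarith [hD.1]
  by_cases hcv : c = v
  · have hdel : insert v (Subtype.val '' D) \ {c} = insert u.1 (Subtype.val '' (D \ {u})) := by
      rw [hcv, insert_sdiff_self_of_notMem (by simp), ← image_insert_eq, insert_sdiff_singleton,
        insert_eq_of_mem hu]
    rw [hdel]
    exact hins u hnu
  have hdel :
      insert v (Subtype.val '' D) \ {c} = insert v (Subtype.val '' (D \ {⟨c, hcv⟩})) := by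
    rw [insert_sdiff_of_notMem _ (show v ∉ ({c} : Set V) from Ne.symm hcv),
      image_sdiff Subtype.val_injective, image_singleton]
  rw [hdel]
  by_cases hcu : ⟨c, hcv⟩ = u
  · rw [hcu]
    exact hins v hnv
  · exact (hD.2 ⟨c, hcv⟩).induce_insert_image_val_of_contractEdge huv ⟨hu, Ne.symm hcu⟩

lemma ncard_compl_le_of_ncard_le [Finite V] {D : Set {x // x ≠ v}} {E : Set V}
    (h : D.ncard ≤ E.ncard) : Eᶜ.ncard ≤ Dᶜ.ncard + 1 := by
  have hV := ncard_add_ncard_compl ({v}ᶜ : Set V)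
  rw [compl_compl, ncard_singleton, ← Nat.card_coe_set_eq] at hV
  have hD := ncard_add_ncard_compl D
  have hE := ncard_add_ncard_compl E
  change Nat.card {x // x ≠ v} + 1 = Nat.card V at hV
  omega

lemma TwoConnectedOn.exists_of_contractEdge [Finite V] (huv : G.Adj u v)
    {D : Set {x // x ≠ v}} (hD : TwoConnectedOn (G.contractEdge u v) D) :
    ∃ E, TwoConnectedOn G E ∧ Eᶜ.ncard ≤ Dᶜ.ncard + 1 := by
  suffices ∃ E, TwoConnectedOn G E ∧ D.ncard ≤ E.ncard by
    obtain ⟨E, hE, hDE⟩ := this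
    exact ⟨E, hE, ncard_compl_le_of_ncard_le hDE⟩
  by_cases hC : u ∈ D ∧ (∃ b ∈ D, b ≠ u ∧ G.Adj u b) ∧
      ∃ b ∈ D, b ≠ u ∧ G.Adj v b
  · obtain ⟨hu, hnu, hnv⟩ := hC
    refine ⟨_, hD.insert_image_val_of_contractEdge huv hu hnu hnv, ?_⟩
    rw [← Subtype.val_injective.injOn.ncard_image]
    exact ncard_le_ncard (subset_insert _ _)
  by_cases hnv : ∃ b ∈ D, b ≠ u ∧ G.Adj v b
  · exact hD.exists_relabel_of_contractEdge (.inr rfl) fun hu b hb hbu h =>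
      h.resolve_left fun hub => hC ⟨hu, ⟨b, hb, hbu, hub⟩, hnv⟩
  · exact hD.exists_relabel_of_contractEdge (.inl rfl) fun _ b hb hbu h =>
      h.resolve_right fun hvb => hnv ⟨b, hb, hbu, hvb⟩

end contractEdge

end SimpleGraph

lemma ContractsIn.exists_twoConnectedOn {V W : Type} {G : SimpleGraph V} {H : SimpleGraph W}
    {n : ℕ} (hGH : ContractsIn G H n) [Finite V] {D : Set W} (hD : TwoConnectedOn H D) :
    ∃ E, TwoConnectedOn G E ∧ Eᶜ.ncard ≤ Dᶜ.ncard + n := by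
  revert D ‹Finite V›
  induction hGH with
  | iso hiso =>
    intro _ D hD
    obtain ⟨φ⟩ := hiso
    refine ⟨φ.symm '' D, hD.image_iso φ.symm, ?_⟩
    rw [← image_compl_eq φ.symm.bijective, φ.symm.injective.injOn.ncard_image]
    omega
  | step u v huv _ ih =>
    intro _ D hD
    obtain ⟨E', hE', hE'D⟩ := ih hD
    obtain ⟨E, hE, hEE'⟩ := hE'.exists_of_contractEdge (u := ⟨u, huv.ne⟩) huv
    exact ⟨E, hE, by omega⟩

lemma IsBlock.le_ncard_compl {V : Type} [Finite V] {G : SimpleGraph V} {B E : Set V}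
    (hB : IsBlock G B) (hE : TwoConnectedOn G E) {m : ℕ} (h1 : m + 1 ≤ B.ncard)
    (h2 : m ≤ Bᶜ.ncard) : m ≤ Eᶜ.ncard := by
  by_cases hEB : 2 ≤ (E ∩ B).ncard
  · have hunion : E ∪ B = B := hB.2 _ subset_union_right
      (twoConnected_induce_iff.2 (hE.union (twoConnected_induce_iff.1 hB.1) hEB))
    exact h2.trans (ncard_le_ncard (compl_subset_compl.2 (union_eq_right.1 hunion)))
  · have hB := ncard_inter_add_ncard_sdiff_eq_ncard B E
    have hBE : (B \ E).ncard ≤ Eᶜ.ncard := ncard_le_ncard fun x hx => hx.2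
    rw [inter_comm] at hEB
    omega

theorem stmt18_general {V : Type} [Finite V] (G : SimpleGraph V)
    (k : ℕ) (B : Set V) (hB : IsBlock G B)
    (h1 : k + 2 ≤ Nat.card B) (h2 : k + 1 ≤ Nat.card ↥(Bᶜ)) :
    ∀ (W : Type) (C : SimpleGraph W), IsCycleGraph C → ¬ KContractible G C k := by
  rintro W C ⟨m, hm, ⟨φ⟩⟩ ⟨n, hnk, hGC⟩
  have hC : TwoConnectedOn C univ := by
    simpa [image_univ_of_surjective φ.symm.surjective] using
      (twoConnectedOn_univ_cycleGraph hm).image_iso φ.symm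
  obtain ⟨E, hE, hEn⟩ := hGC.exists_twoConnectedOn hC
  rw [Nat.card_coe_set_eq] at h1 h2
  have := hB.le_ncard_compl hE h1 h2
  rw [compl_univ, ncard_empty] at hEn
  omega

/-- If a connected graph `G` has a block `B` with `|V(B)| ≥ k + 2` and
`|V(G) \ V(B)| ≥ k + 1`, then `G` is not `k`-contractible to a cycle. -/
theorem stmt18 {V : Type} [Finite V] (G : SimpleGraph V) (hconn : G.Connected)
    (k : ℕ) (B : Set V) (hB : IsBlock G B)
    (h1 : k + 2 ≤ Nat.card B) (h2 : k + 1 ≤ Nat.card ↥(Bᶜ)) :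
    ∀ (W : Type) (C : SimpleGraph W), IsCycleGraph C → ¬ KContractible G C k :=
  stmt18_general G k B hB h1 h2
end
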